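/- For all planar clear-edged m-bonsais T_1 and T_2, ∂(T_1 *_1 T_2) = (∂T_1) *_1 T_2 + T_1 *_1 (∂T_2); that is, the second deviation T_1 *_2 T_2 = ∂(T_1 *_1 T_2) + (∂T_1) *_1 T_2 + T_1 *_1 (∂T_2) vanishes identically. -/

import Mathlib

/-! Core definitions for planar clear-edged bonsais, following Byun,
"A Generalization of Connes-Kreimer Hopf Algebra".

A planar clear-edged `m`-bonsai is a finite rooted plane tree (children of each
vertex linearly ordered, edges unlabeled) in which every vertex has at most `m`
children; we also allow `m = ∞` (no arity bound), so the bound is an `ℕ∞`.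
We encode such a tree by its finite set of vertex addresses: the address of a
vertex is the list of the positions (counted from the left, starting at `0`) of
the successive edges on the path from the root to it.  Such a set of addresses
is prefix-closed and left-sibling-closed, and the arity bound says that every
entry of every address is `< m`. -/

open scoped Classical

structure PTree (m : ℕ∞) where
  verts : Finset (List ℕ)
  root_mem : ([] : List ℕ) ∈ verts
  prefix_closed : ∀ ⦃p q : List ℕ⦄, p ∈ verts → q <+: p → q ∈ verts
  sibling_closed : ∀ (p : List ℕ) (i : ℕ), p ++ [i + 1] ∈ verts → p ++ [i] ∈ verts
  arity_bound : ∀ p ∈ verts, ∀ a ∈ p, (a : ℕ∞) < m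

namespace PTree

variable {m : ℕ∞}

theorem ext' {T U : PTree m} (h : T.verts = U.verts) : T = U := by
  cases T; cases U; simp_all

/-- The one-vertex plane tree. -/
def point (m : ℕ∞) : PTree m where
  verts := {[]}
  root_mem := by simp
  prefix_closed := by
    intro p q hp hq
    simp only [Finset.mem_singleton] at hp ⊢
    subst hp
    exact List.prefix_nil.mp hq
  sibling_closed := by
    intro p i hp
    simp only [Finset.mem_singleton] at hp
    exact absurd hp (by simp)
  arity_bound := by
    intro p hp a ha
    simp only [Finset.mem_singleton] at hp
    subst hp
    simp at ha

/-- Rebuild a plane tree from a raw vertex set (returning the one-vertex tree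
on junk input; by proof irrelevance this is harmless). -/
noncomputable def mk' (m : ℕ∞) (s : Finset (List ℕ)) : PTree m :=
  if h : ([] : List ℕ) ∈ s
      ∧ (∀ ⦃p q : List ℕ⦄, p ∈ s → q <+: p → q ∈ s)
      ∧ (∀ (p : List ℕ) (i : ℕ), p ++ [i + 1] ∈ s → p ++ [i] ∈ s)
      ∧ (∀ p ∈ s, ∀ a ∈ p, (a : ℕ∞) < m)
  then ⟨s, h.1, h.2.1, h.2.2.1, h.2.2.2⟩ else point m

/-- The number of children of the vertex `v` in `T`. -/
noncomputable def arity (T : PTree m) (v : List ℕ) : ℕ :=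
  (T.verts.filter (fun p => v <+: p ∧ p.length = v.length + 1)).card

/-- The number of edges of `T`. -/
def numEdges (T : PTree m) : ℕ := T.verts.card - 1

/-- A vertex of `T` is a tip iff it is incident to exactly one edge and is not
the root, or `T` is the one-vertex tree; equivalently, iff it has no children. -/
noncomputable def IsTip (T : PTree m) (v : List ℕ) : Prop :=
  v ∈ T.verts ∧ arity T v = 0

/-- Re-addressing of vertices when a new child is inserted at position `j` of
the vertex `v`: children of `v` in positions `≥ j` are shifted one step to the
right (together with their subtrees). -/
def shiftAt (v : List ℕ) (j : ℕ) (q : List ℕ) : List ℕ :=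
  if v <+: q then
    match q.drop v.length with
    | [] => q
    | i :: r => if j ≤ i then v ++ (i + 1) :: r else q
  else q

/-- The vertex set obtained from `T` by attaching one new edge to the vertex
`v`, in planar position `j` (with the later siblings shifted right). -/
noncomputable def attachVerts (T : PTree m) (v : List ℕ) (j : ℕ) : Finset (List ℕ) :=
  insert (v ++ [j]) (T.verts.image (shiftAt v j))

/-- The plane tree obtained from `T` by attaching one new edge to the vertex
`v` in planar position `j`. -/
noncomputable def attach (T : PTree m) (v : List ℕ) (j : ℕ) : PTree m :=
  mk' m (attachVerts T v j)

/-- The vertices of `T` at which the vertex-appending differential may attach a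
new edge: the non-tips with fewer than `m` children. -/
noncomputable def attachable (T : PTree m) : Finset (List ℕ) :=
  T.verts.filter (fun v => arity T v ≠ 0 ∧ (arity T v : ℕ∞) < m)

end PTree

section Differential

variable (k : Type) [Field k] (m : ℕ∞)

/-- The free `k`-module on planar clear-edged bonsais (with the determinant
terms of the edges normalized to the traversing order, i.e. the lexicographic
order of the addresses). -/
abbrev PTreeMod (k : Type) [Field k] (m : ℕ∞) := PTree m →₀ k

/-- The vertex-appending differential on a determinanted planar clear-edged
bonsai: `∂(T ⊗ det T) = Σ T' ⊗ e ∧ det T`, summed over all trees `T'` obtained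
from `T` by attaching one new edge `e`, in any planar position, to a vertex
that is not a tip and has fewer than `m` children; `e ∧ det T` is re-expressed
in the traversing order of `T'` using the sign rule. -/
noncomputable def pVal (T : PTree m) : PTreeMod k m :=
  ∑ v ∈ PTree.attachable T, ∑ j ∈ Finset.range (PTree.arity T v + 1),
    ((-1 : k) ^ ((((PTree.attachVerts T v j).erase []).filter
        (fun q => q < v ++ [j])).card))
      • Finsupp.single (PTree.attach T v j) 1

/-- The vertex-appending differential, extended linearly. -/
noncomputable def pMap : PTreeMod k m →ₗ[k] PTreeMod k m :=
  Finsupp.lsum k (fun T => LinearMap.toSpanSingleton k (PTreeMod k m) (pVal k m T))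

end Differential

section CharTwoPlanar

variable (k : Type) [Field k] (m : ℕ∞)

/-- The vertex-appending differential mod 2 (no determinant terms):
`∂T = Σ T'`, summed over all planar clear-edged `m`-bonsais `T'` obtained from
`T` by attaching one new edge, in any planar position, to a vertex of `T` that
is not a tip and has fewer than `m` children. -/
noncomputable def p2Val (T : PTree m) : PTreeMod k m :=
  ∑ v ∈ PTree.attachable T, ∑ j ∈ Finset.range (PTree.arity T v + 1),
    Finsupp.single (PTree.attach T v j) (1 : k)

/-- The mod-2 vertex-appending differential, extended linearly. -/
noncomputable def p2Map : PTreeMod k m →ₗ[k] PTreeMod k m :=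
  Finsupp.lsum k (fun T => LinearMap.toSpanSingleton k (PTreeMod k m) (p2Val k m T))

/-- Joining the root of `T1` to the vertex `v` of `T2` by one new edge, in
planar position `j` (the later siblings of the new edge shifted right). -/
noncomputable def graftP (T1 T2 : PTree m) (v : List ℕ) (j : ℕ) : PTree m :=
  PTree.mk' m ((T2.verts.image (PTree.shiftAt v j))
    ∪ (T1.verts.image (fun q => v ++ j :: q)))

/-- The appending operation: `T1 * T2 = Σ` of all planar clear-edged
`m`-bonsais obtained by joining the root of `T1` to a vertex of `T2` having
fewer than `m` children by one new edge, over all such vertices and all planar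
positions. -/
noncomputable def starP (T1 T2 : PTree m) : PTreeMod k m :=
  ∑ v ∈ T2.verts.filter (fun v => (PTree.arity T2 v : ℕ∞) < m),
    ∑ j ∈ Finset.range (PTree.arity T2 v + 1),
      Finsupp.single (graftP m T1 T2 v j) (1 : k)

/-- The bilinear extension of `*`. -/
noncomputable def starPLin : PTreeMod k m →ₗ[k] PTreeMod k m →ₗ[k] PTreeMod k m :=
  Finsupp.lsum k (fun T1 => LinearMap.toSpanSingleton k _
    (Finsupp.lsum k (fun T2 =>
      LinearMap.toSpanSingleton k (PTreeMod k m) (starP k m T1 T2))))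

/-- The first deviation `T1 *₁ T2 = ∂(T1 * T2) + (∂T1) * T2 + T1 * (∂T2)`
(coefficients mod 2). -/
noncomputable def dev1P (T1 T2 : PTree m) : PTreeMod k m :=
  p2Map k m (starP k m T1 T2)
    + starPLin k m (p2Val k m T1) (Finsupp.single T2 1)
    + starPLin k m (Finsupp.single T1 1) (p2Val k m T2)

/-- The bilinear extension of `*₁`. -/
noncomputable def dev1PLin : PTreeMod k m →ₗ[k] PTreeMod k m →ₗ[k] PTreeMod k m :=
  Finsupp.lsum k (fun T1 => LinearMap.toSpanSingleton k _
    (Finsupp.lsum k (fun T2 =>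
      LinearMap.toSpanSingleton k (PTreeMod k m) (dev1P k m T1 T2))))

end CharTwoPlanar
/-! ### Auxiliary lemmas -/

namespace PTree

variable {m : ℕ∞}

private lemma cons_head_eq {v r : List ℕ} {a b : ℕ} (h : a = b) :
    v ++ a :: r = v ++ b :: r := by rw [h]

private lemma append_cons_append (v : List ℕ) (a : ℕ) (r t : List ℕ) :
    v ++ a :: (r ++ t) = (v ++ a :: r) ++ t := by simp

lemma shiftAt_of_not_prefix {v q : List ℕ} (j : ℕ) (h : ¬ v <+: q) :
    shiftAt v j q = q := by
  unfold shiftAt; rw [if_neg h]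

lemma shiftAt_self (v : List ℕ) (j : ℕ) : shiftAt v j v = v := by
  unfold shiftAt
  rw [if_pos List.prefix_rfl]
  simp

lemma shiftAt_cons (v : List ℕ) (j c : ℕ) (r : List ℕ) :
    shiftAt v j (v ++ c :: r) = v ++ (if j ≤ c then c + 1 else c) :: r := by
  unfold shiftAt
  rw [if_pos (List.prefix_append v _)]
  simp only [List.drop_left]
  split_ifs with h <;> rfl

lemma shiftAt_nil (v : List ℕ) (j : ℕ) : shiftAt v j [] = [] := by
  rcases eq_or_ne v [] with rfl | h
  · exact shiftAt_self [] j
  · exact shiftAt_of_not_prefix j (fun hp => h (List.prefix_nil.mp hp))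

lemma prefix_cases (v q : List ℕ) : ¬ v <+: q ∨ v = q ∨ ∃ c r, q = v ++ c :: r := by
  by_cases h : v <+: q
  · obtain ⟨t, rfl⟩ := h
    cases t with
    | nil => right; left; simp
    | cons c r => right; right; exact ⟨c, r, rfl⟩
  · exact Or.inl h

/-- Inverse re-addressing. -/
def unshiftAt (v : List ℕ) (j : ℕ) (q : List ℕ) : List ℕ :=
  if v <+: q then
    match q.drop v.length with
    | [] => q
    | i :: r => if j < i then v ++ (i - 1) :: r else q
  else q

lemma unshiftAt_of_not_prefix {v q : List ℕ} (j : ℕ) (h : ¬ v <+: q) :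
    unshiftAt v j q = q := by
  unfold unshiftAt; rw [if_neg h]

lemma unshiftAt_self (v : List ℕ) (j : ℕ) : unshiftAt v j v = v := by
  unfold unshiftAt
  rw [if_pos List.prefix_rfl]
  simp

lemma unshiftAt_cons (v : List ℕ) (j c : ℕ) (r : List ℕ) :
    unshiftAt v j (v ++ c :: r) = v ++ (if j < c then c - 1 else c) :: r := by
  unfold unshiftAt
  rw [if_pos (List.prefix_append v _)]
  simp only [List.drop_left]
  split_ifs with h <;> rfl

lemma unshift_shift (v : List ℕ) (j : ℕ) (q : List ℕ) :
    unshiftAt v j (shiftAt v j q) = q := by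
  rcases prefix_cases v q with h | rfl | ⟨c, r, rfl⟩
  · rw [shiftAt_of_not_prefix j h, unshiftAt_of_not_prefix j h]
  · rw [shiftAt_self, unshiftAt_self]
  · rw [shiftAt_cons, unshiftAt_cons]
    exact cons_head_eq (by split_ifs <;> omega)

lemma shiftAt_injective (v : List ℕ) (j : ℕ) : Function.Injective (shiftAt v j) :=
  Function.LeftInverse.injective (g := unshiftAt v j) (unshift_shift v j)

lemma mem_attachVerts {T : PTree m} {v : List ℕ} {j : ℕ} {x : List ℕ} :
    x ∈ attachVerts T v j ↔ x = v ++ [j] ∨ ∃ y ∈ T.verts, shiftAt v j y = x := by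
  simp [attachVerts, eq_comm]

lemma shiftAt_mem_attachVerts {T : PTree m} {v y : List ℕ} {j : ℕ} (hy : y ∈ T.verts) :
    shiftAt v j y ∈ attachVerts T v j :=
  Finset.mem_insert_of_mem (Finset.mem_image_of_mem _ hy)

lemma child_down {T : PTree m} {v : List ℕ} {b c : ℕ} (hbc : b ≤ c)
    (h : v ++ [c] ∈ T.verts) : v ++ [b] ∈ T.verts := by
  induction c with
  | zero => have hb : b = 0 := by omega
            subst hb; exact h
  | succ n ih =>
    rcases Nat.lt_or_ge b (n + 1) with hb | hb
    · exact ih (by omega) (T.sibling_closed v n h)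
    · have : b = n + 1 := by omega
      subst this; exact h

private lemma child_inj (v : List ℕ) : Function.Injective (fun b : ℕ => v ++ [b]) := by
  intro a b h
  simpa using List.append_cancel_left h

lemma child_card_set {T : PTree m} (v : List ℕ) :
    T.verts.filter (fun p => v <+: p ∧ p.length = v.length + 1)
      = T.verts.filter (fun p => ∃ c, p = v ++ [c]) := by
  ext p
  simp only [Finset.mem_filter, and_congr_right_iff]
  intro _
  constructor
  · rintro ⟨⟨t, rfl⟩, hlen⟩
    have ht : t.length = 1 := by simpa using hlen
    obtain ⟨b, rfl⟩ : ∃ b, t = [b] := by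
      cases t with
      | nil => simp at ht
      | cons a s => cases s with
        | nil => exact ⟨a, rfl⟩
        | cons x y => simp at ht
    exact ⟨b, rfl⟩
  · rintro ⟨c, rfl⟩
    exact ⟨List.prefix_append _ _, by simp⟩

lemma mem_child_iff {T : PTree m} {v : List ℕ} {c : ℕ} :
    v ++ [c] ∈ T.verts ↔ c < arity T v := by
  constructor
  · intro h
    have hsub : (Finset.range (c + 1)).image (fun b => v ++ [b]) ⊆
        T.verts.filter (fun p => v <+: p ∧ p.length = v.length + 1) := by
      intro p hp
      simp only [Finset.mem_image, Finset.mem_range] at hp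
      obtain ⟨b, hb, rfl⟩ := hp
      exact Finset.mem_filter.mpr ⟨child_down (by omega) h, List.prefix_append _ _, by simp⟩
    have hc := Finset.card_le_card hsub
    rw [Finset.card_image_of_injective _ (child_inj v), Finset.card_range] at hc
    unfold arity
    omega
  · intro h
    by_contra hc
    have hsub : T.verts.filter (fun p => v <+: p ∧ p.length = v.length + 1) ⊆
        (Finset.range c).image (fun b => v ++ [b]) := by
      intro p hp
      rw [child_card_set] at hp
      simp only [Finset.mem_filter] at hp
      obtain ⟨hpv, b, rfl⟩ := hp
      simp only [Finset.mem_image, Finset.mem_range]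
      refine ⟨b, ?_, rfl⟩
      by_contra hb
      exact hc (child_down (by omega) hpv)
    have hcc := Finset.card_le_card hsub
    rw [Finset.card_image_of_injective _ (child_inj v), Finset.card_range] at hcc
    unfold arity at h
    omega

end PTree
namespace PTree

variable {m : ℕ∞} {T : PTree m} {v : List ℕ} {j : ℕ}

lemma prefix_append_cons {q v : List ℕ} {c : ℕ} {r : List ℕ} (h : q <+: v ++ c :: r) :
    q <+: v ∨ ∃ r', q = v ++ c :: r' ∧ r' <+: r := by
  rcases le_or_gt q.length v.length with hl | hl
  · exact Or.inl (List.prefix_of_prefix_length_le h (List.prefix_append _ _) hl)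
  · have hvq : v <+: q := List.prefix_of_prefix_length_le (List.prefix_append _ _) h (by omega)
    obtain ⟨t, rfl⟩ := hvq
    rw [List.prefix_append_right_inj] at h
    cases t with
    | nil => simp at hl
    | cons a s =>
      rw [List.cons_prefix_cons] at h
      exact Or.inr ⟨s, by rw [h.1], h.2⟩

lemma shiftAt_of_prefix {q : List ℕ} (h : q <+: v) : shiftAt v j q = q := by
  rcases prefix_cases v q with h1 | rfl | ⟨c, r, rfl⟩
  · exact shiftAt_of_not_prefix j h1
  · exact shiftAt_self v j
  · exfalso
    have h2 := h.length_le
    simp only [List.length_append, List.length_cons] at h2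
    omega

lemma not_append_cons_prefix (v : List ℕ) (c : ℕ) (r : List ℕ) : ¬ (v ++ c :: r) <+: v := by
  intro h
  have h2 := h.length_le
  simp only [List.length_append, List.length_cons] at h2
  omega

lemma attachVerts_root : ([] : List ℕ) ∈ attachVerts T v j := by
  have h := shiftAt_mem_attachVerts (T := T) (v := v) (j := j) T.root_mem
  rwa [shiftAt_nil] at h

lemma attachVerts_prefix (hv : v ∈ T.verts) :
    ∀ ⦃p q : List ℕ⦄, p ∈ attachVerts T v j → q <+: p → q ∈ attachVerts T v j := by
  intro p q hp hq
  rw [mem_attachVerts] at hp ⊢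
  rcases hp with rfl | ⟨y, hy, rfl⟩
  · rcases prefix_append_cons hq with hqv | ⟨r', rfl, hr'⟩
    · exact Or.inr ⟨q, T.prefix_closed hv hqv, shiftAt_of_prefix hqv⟩
    · left
      rw [List.prefix_nil] at hr'
      rw [hr']
  · rcases prefix_cases v y with h1 | rfl | ⟨c, r, rfl⟩
    · rw [shiftAt_of_not_prefix j h1] at hq
      refine Or.inr ⟨q, T.prefix_closed hy hq, ?_⟩
      rcases prefix_cases v q with h2 | rfl | ⟨c, r, rfl⟩
      · exact shiftAt_of_not_prefix j h2
      · exact shiftAt_self v j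
      · exact absurd ((List.prefix_append v (c :: r)).trans hq) h1
    · rw [shiftAt_self] at hq
      exact Or.inr ⟨q, T.prefix_closed hy hq, shiftAt_of_prefix hq⟩
    · rw [shiftAt_cons] at hq
      rcases prefix_append_cons hq with hqv | ⟨r', rfl, hr'⟩
      · exact Or.inr ⟨q, T.prefix_closed hv hqv, shiftAt_of_prefix hqv⟩
      · refine Or.inr ⟨v ++ c :: r', T.prefix_closed hy ?_, ?_⟩
        · exact (List.prefix_append_right_inj v).mpr (List.cons_prefix_cons.mpr ⟨rfl, hr'⟩)
        · rw [shiftAt_cons]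

lemma attachVerts_sibling (hv : v ∈ T.verts) (hj : j ≤ arity T v) :
    ∀ (p : List ℕ) (t : ℕ), p ++ [t + 1] ∈ attachVerts T v j →
      p ++ [t] ∈ attachVerts T v j := by
  intro p t hp
  rw [mem_attachVerts] at hp ⊢
  rcases hp with h | ⟨y, hy, h⟩
  · obtain ⟨rfl, hj'⟩ := List.append_inj' h rfl
    have htj : t + 1 = j := by simpa using hj'
    refine Or.inr ⟨p ++ [t], ?_, ?_⟩
    · rw [mem_child_iff]; omega
    · rw [shiftAt_cons, if_neg (by omega)]
  · rcases prefix_cases v y with h1 | rfl | ⟨c, r, rfl⟩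
    · rw [shiftAt_of_not_prefix j h1] at h
      subst h
      refine Or.inr ⟨p ++ [t], T.sibling_closed p t hy, ?_⟩
      rcases prefix_cases v (p ++ [t]) with h2 | h2 | ⟨c, r, h2⟩
      · exact shiftAt_of_not_prefix j h2
      · rw [← h2, shiftAt_self]
      · exfalso
        have hvp : v <+: p := by
          apply List.prefix_of_prefix_length_le (h2 ▸ List.prefix_append v _)
            (List.prefix_append p [t])
          have hlen := congrArg List.length h2
          simp only [List.length_append, List.length_cons, List.length_nil,
            List.length_singleton] at hlen
          omega
        exact h1 (hvp.trans (List.prefix_append p [t + 1]))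
    · rw [shiftAt_self] at h
      refine Or.inr ⟨p ++ [t], T.sibling_closed p t (h ▸ hy), ?_⟩
      refine shiftAt_of_not_prefix j (fun hpre => ?_)
      have heq : v = p ++ [t] := hpre.eq_of_length (by rw [h]; simp)
      rw [h] at heq
      have h3 := (List.append_inj' heq rfl).2
      simp at h3
    · rw [shiftAt_cons] at h
      rcases r.eq_nil_or_concat with rfl | ⟨r₀, x, rfl⟩
      · obtain ⟨rfl, h2⟩ := List.append_inj' h rfl
        have hc : (if j ≤ c then c + 1 else c) = t + 1 := by simpa using h2
        by_cases hjc : j ≤ c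
        · rw [if_pos hjc] at hc
          have hct : c = t := by omega
          subst hct
          by_cases hcj : c = j
          · left; rw [hcj]
          · refine Or.inr ⟨v ++ [c - 1], ?_, ?_⟩
            · have hcar := mem_child_iff.mp hy
              exact mem_child_iff.mpr (by omega)
            · rw [shiftAt_cons, if_pos (by omega)]
              exact cons_head_eq (by omega)
        · rw [if_neg hjc] at hc
          refine Or.inr ⟨v ++ [t], ?_, ?_⟩
          · have hcar := mem_child_iff.mp hy
            exact mem_child_iff.mpr (by omega)
          · rw [shiftAt_cons, if_neg (by omega)]
      · simp only [List.concat_eq_append] at h hy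
        rw [append_cons_append] at h
        obtain ⟨rfl, h2⟩ := List.append_inj' h rfl
        have hx : x = t + 1 := by simpa using h2
        subst hx
        refine Or.inr ⟨v ++ c :: (r₀ ++ [t]), ?_, ?_⟩
        · have hmem : (v ++ c :: r₀) ++ [t + 1] ∈ T.verts := by
            rw [← append_cons_append]; exact hy
          have := T.sibling_closed _ t hmem
          rwa [← append_cons_append] at this
        · rw [shiftAt_cons, append_cons_append]

lemma attachVerts_arity (hv : v ∈ T.verts) (hj : j ≤ arity T v)
    (ham : (arity T v : ℕ∞) < m) :
    ∀ p ∈ attachVerts T v j, ∀ a ∈ p, (a : ℕ∞) < m := by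
  intro p hp a ha
  rw [mem_attachVerts] at hp
  rcases hp with rfl | ⟨y, hy, rfl⟩
  · rw [List.mem_append] at ha
    rcases ha with ha | ha
    · exact T.arity_bound v hv a ha
    · simp only [List.mem_singleton] at ha
      subst ha
      exact lt_of_le_of_lt (by exact_mod_cast hj) ham
  · rcases prefix_cases v y with h1 | rfl | ⟨c, r, rfl⟩
    · rw [shiftAt_of_not_prefix j h1] at ha
      exact T.arity_bound y hy a ha
    · rw [shiftAt_self] at ha
      exact T.arity_bound v hv a ha
    · rw [shiftAt_cons] at ha
      rw [List.mem_append, List.mem_cons] at ha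
      rcases ha with ha | ha | ha
      · exact T.arity_bound _ hy a (by simp [ha])
      · have hvc : v ++ [c] ∈ T.verts :=
          T.prefix_closed hy ((List.prefix_append_right_inj v).mpr
            (List.cons_prefix_cons.mpr ⟨rfl, List.nil_prefix⟩))
        have hc := mem_child_iff.mp hvc
        subst ha
        have : (if j ≤ c then c + 1 else c) ≤ arity T v := by split_ifs <;> omega
        exact lt_of_le_of_lt (by exact_mod_cast this) ham
      · exact T.arity_bound _ hy a (by simp [ha])

lemma attach_verts (hv : v ∈ T.verts) (hj : j ≤ arity T v)
    (ham : (arity T v : ℕ∞) < m) :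
    (attach T v j).verts = attachVerts T v j := by
  unfold attach mk'
  rw [dif_pos ⟨attachVerts_root, attachVerts_prefix hv, attachVerts_sibling hv hj,
    attachVerts_arity hv hj ham⟩]

lemma arity_eq_of_forall {U : PTree m} {w : List ℕ} {n : ℕ}
    (h : ∀ c, w ++ [c] ∈ U.verts ↔ c < n) : arity U w = n := by
  have h2 : ∀ c, c < arity U w ↔ c < n := fun c => (mem_child_iff (T := U)).symm.trans (h c)
  rcases lt_trichotomy (arity U w) n with hlt | he | hgt
  · exact absurd ((h2 _).mpr hlt) (lt_irrefl _)
  · exact he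
  · exact absurd ((h2 _).mp hgt) (lt_irrefl _)

lemma shiftAt_append_single {u v : List ℕ} (j c : ℕ) (h : u ≠ v) :
    shiftAt v j (u ++ [c]) = shiftAt v j u ++ [c] := by
  rcases prefix_cases v u with h1 | rfl | ⟨d, r, rfl⟩
  · rw [shiftAt_of_not_prefix j h1]
    rcases prefix_cases v (u ++ [c]) with h2 | h2 | ⟨e, s, h2⟩
    · rw [shiftAt_of_not_prefix j h2]
    · rw [← h2, shiftAt_self]
    · exfalso
      have hlen : v.length ≤ u.length := by
        have hl := congrArg List.length h2
        simp only [List.length_append, List.length_cons, List.length_singleton,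
          List.length_nil] at hl
        omega
      exact h1 (List.prefix_of_prefix_length_le (h2 ▸ List.prefix_append v _)
        (List.prefix_append u [c]) hlen)
  · exact absurd rfl h
  · rw [shiftAt_cons, ← append_cons_append, shiftAt_cons, append_cons_append]

lemma shiftAt_ne_new (v : List ℕ) (j : ℕ) (s q : List ℕ) :
    shiftAt v j q ≠ v ++ j :: s := by
  rcases prefix_cases v q with h1 | rfl | ⟨c, r, rfl⟩
  · rw [shiftAt_of_not_prefix j h1]
    intro h
    subst h
    exact h1 (List.prefix_append v _)
  · rw [shiftAt_self]
    intro h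
    have := congrArg List.length h
    simp only [List.length_append, List.length_cons, List.length_nil] at this
    omega
  · rw [shiftAt_cons]
    intro h
    have h2 := List.append_cancel_left h
    have h3 : (if j ≤ c then c + 1 else c) = j := (List.cons_eq_cons.mp h2).1
    split_ifs at h3 <;> omega

lemma arity_attach_self (hv : v ∈ T.verts) (hj : j ≤ arity T v)
    (ham : (arity T v : ℕ∞) < m) :
    arity (attach T v j) v = arity T v + 1 := by
  apply arity_eq_of_forall
  intro c
  rw [attach_verts hv hj ham, mem_attachVerts]
  constructor
  · rintro (h | ⟨y, hy, h⟩)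
    · have hcj : c = j := by
        have := (List.append_inj' h rfl).2
        simpa using this
      omega
    · rcases prefix_cases v y with h1 | rfl | ⟨d, r, rfl⟩
      · rw [shiftAt_of_not_prefix j h1] at h
        subst h
        exact absurd (List.prefix_append v [c]) h1
      · rw [shiftAt_self] at h
        exfalso
        have := congrArg List.length h
        simp only [List.length_append, List.length_singleton] at this
        omega
      · rw [shiftAt_cons] at h
        have h2 := List.append_cancel_left h
        obtain ⟨he, hr⟩ := List.cons_eq_cons.mp h2
        subst hr
        have hd := mem_child_iff.mp hy
        split_ifs at he <;> omega
  · intro hc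
    rcases lt_trichotomy c j with h1 | rfl | h1
    · exact Or.inr ⟨v ++ [c], mem_child_iff.mpr (by omega),
        by rw [shiftAt_cons, if_neg (by omega)]⟩
    · exact Or.inl rfl
    · refine Or.inr ⟨v ++ [c - 1], mem_child_iff.mpr (by omega), ?_⟩
      rw [shiftAt_cons, if_pos (by omega)]
      exact cons_head_eq (by omega)

lemma arity_attach_other (hv : v ∈ T.verts) (hj : j ≤ arity T v)
    (ham : (arity T v : ℕ∞) < m) {u : List ℕ} (hu : u ∈ T.verts) (hne : u ≠ v) :
    arity (attach T v j) (shiftAt v j u) = arity T u := by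
  apply arity_eq_of_forall
  intro c
  rw [attach_verts hv hj ham, mem_attachVerts, ← shiftAt_append_single j c hne]
  constructor
  · rintro (h | ⟨y, hy, h⟩)
    · exact absurd h (shiftAt_ne_new v j [] _)
    · rw [← mem_child_iff]
      rwa [← shiftAt_injective v j h]
  · intro h
    exact Or.inr ⟨u ++ [c], mem_child_iff.mpr h, rfl⟩

lemma arity_attach_new (hv : v ∈ T.verts) (hj : j ≤ arity T v)
    (ham : (arity T v : ℕ∞) < m) :
    arity (attach T v j) (v ++ [j]) = 0 := by
  apply arity_eq_of_forall
  intro c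
  simp only [Nat.not_lt_zero, iff_false]
  rw [attach_verts hv hj ham, mem_attachVerts]
  rintro (h | ⟨y, hy, h⟩)
  · have := congrArg List.length h
    simp only [List.length_append, List.length_cons, List.length_singleton] at this
    omega
  · rw [← append_cons_append] at h
    exact shiftAt_ne_new v j [c] y (by simpa using h)

end PTree
namespace PTree

variable {m : ℕ∞} {T : PTree m}

lemma shiftAt_comm_same {v : List ℕ} {i j : ℕ} (hij : i ≤ j) (q : List ℕ) :
    shiftAt v i (shiftAt v j q) = shiftAt v (j + 1) (shiftAt v i q) := by
  rcases prefix_cases v q with h1 | rfl | ⟨c, r, rfl⟩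
  · rw [shiftAt_of_not_prefix j h1, shiftAt_of_not_prefix i h1,
      shiftAt_of_not_prefix (j + 1) h1]
  · simp only [shiftAt_self]
  · rw [shiftAt_cons, shiftAt_cons, shiftAt_cons, shiftAt_cons]
    exact cons_head_eq (by split_ifs <;> omega)

lemma shiftAt_comm_incomp {u v : List ℕ} (hvu : ¬ v <+: u) (huv : ¬ u <+: v)
    (i j : ℕ) (q : List ℕ) :
    shiftAt u i (shiftAt v j q) = shiftAt v j (shiftAt u i q) := by
  have keyv : ∀ (x : ℕ) (s : List ℕ), ¬ v <+: u ++ x :: s := by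
    intro x s h
    rcases le_or_gt v.length u.length with hl | hl
    · exact hvu (List.prefix_of_prefix_length_le h (List.prefix_append _ _) hl)
    · refine huv (List.prefix_of_prefix_length_le (List.prefix_append _ _) h (by omega))
  have keyu : ∀ (x : ℕ) (s : List ℕ), ¬ u <+: v ++ x :: s := by
    intro x s h
    rcases le_or_gt u.length v.length with hl | hl
    · exact huv (List.prefix_of_prefix_length_le h (List.prefix_append _ _) hl)
    · refine hvu (List.prefix_of_prefix_length_le (List.prefix_append _ _) h (by omega))
  rcases prefix_cases v q with h1 | rfl | ⟨c, r, rfl⟩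
  · rw [shiftAt_of_not_prefix j h1]
    rcases prefix_cases u q with h2 | rfl | ⟨d, s, rfl⟩
    · rw [shiftAt_of_not_prefix i h2, shiftAt_of_not_prefix j h1]
    · simp only [shiftAt_self, shiftAt_of_not_prefix j h1]
    · rw [shiftAt_cons, shiftAt_of_not_prefix j (keyv _ _)]
  · rw [shiftAt_self, shiftAt_of_not_prefix i huv, shiftAt_self]
  · rw [shiftAt_cons, shiftAt_of_not_prefix i (keyu _ _),
      shiftAt_of_not_prefix i (keyu _ _), shiftAt_cons]

lemma shiftAt_comm_nested {v : List ℕ} {c : ℕ} {r : List ℕ} (i j : ℕ) (q : List ℕ) :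
    shiftAt (shiftAt v j (v ++ c :: r)) i (shiftAt v j q)
      = shiftAt v j (shiftAt (v ++ c :: r) i q) := by
  have hbump : ∀ a b : ℕ, (if j ≤ a then a + 1 else a) = (if j ≤ b then b + 1 else b) → a = b := by
    intro a b h; split_ifs at h <;> omega
  rw [shiftAt_cons]
  rcases prefix_cases v q with h1 | rfl | ⟨e, s, rfl⟩
  · have h2 : ¬ (v ++ c :: r) <+: q := fun h => h1 ((List.prefix_append v _).trans h)
    have h3 : ¬ (v ++ (if j ≤ c then c + 1 else c) :: r) <+: q :=
      fun h => h1 ((List.prefix_append v _).trans h)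
    rw [shiftAt_of_not_prefix j h1, shiftAt_of_not_prefix i h3,
      shiftAt_of_not_prefix i h2, shiftAt_of_not_prefix j h1]
  · rw [shiftAt_self, shiftAt_of_not_prefix i (not_append_cons_prefix v _ r),
      shiftAt_of_not_prefix i (not_append_cons_prefix v _ r), shiftAt_self]
  · rw [shiftAt_cons]
    by_cases hces : c = e ∧ r <+: s
    · obtain ⟨rfl, hrs⟩ := hces
      obtain ⟨z, rfl⟩ := hrs
      cases z with
      | nil =>
        simp only [List.append_nil]
        rw [shiftAt_self, shiftAt_self, shiftAt_cons]
      | cons f z' =>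
        rw [append_cons_append, shiftAt_cons, ← append_cons_append,
          append_cons_append v c r (f :: z'), shiftAt_cons, ← append_cons_append,
          shiftAt_cons]
    · have hnp : ¬ (v ++ c :: r) <+: v ++ e :: s := by
        rw [List.prefix_append_right_inj, List.cons_prefix_cons]
        exact hces
      have hnp' : ¬ (v ++ (if j ≤ c then c + 1 else c) :: r)
          <+: v ++ (if j ≤ e then e + 1 else e) :: s := by
        rw [List.prefix_append_right_inj, List.cons_prefix_cons]
        rintro ⟨hce, hrs⟩
        exact hces ⟨hbump _ _ hce, hrs⟩
      rw [shiftAt_of_not_prefix i hnp', shiftAt_of_not_prefix i hnp, shiftAt_cons]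

end PTree
namespace PTree

variable {m : ℕ∞} {T : PTree m}

lemma shiftAt_comm_ne {u v : List ℕ} (hne : u ≠ v) (i j : ℕ) (q : List ℕ) :
    shiftAt (shiftAt v j u) i (shiftAt v j q)
      = shiftAt (shiftAt u i v) j (shiftAt u i q) := by
  rcases prefix_cases v u with h1 | rfl | ⟨c, r, rfl⟩
  · rcases prefix_cases u v with h2 | rfl | ⟨d, s, rfl⟩
    · rw [shiftAt_of_not_prefix j h1, shiftAt_of_not_prefix i h2]
      exact shiftAt_comm_incomp h1 h2 i j q
    · exact absurd rfl hne
    · rw [shiftAt_of_not_prefix j h1]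
      exact (shiftAt_comm_nested (v := u) (c := d) (r := s) j i q).symm
  · exact absurd rfl hne
  · have h2 : ¬ (v ++ c :: r) <+: v := not_append_cons_prefix v c r
    rw [shiftAt_of_not_prefix i h2]
    exact shiftAt_comm_nested i j q

lemma shiftAt_new_comm {u v : List ℕ} (hne : u ≠ v) (i j : ℕ) :
    shiftAt (shiftAt v j u) i (v ++ [j]) = shiftAt u i v ++ [j] := by
  rcases prefix_cases v u with h1 | rfl | ⟨c, r, rfl⟩
  · rcases prefix_cases u v with h2 | rfl | ⟨d, s, rfl⟩
    · rw [shiftAt_of_not_prefix j h1, shiftAt_of_not_prefix i h2]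
      apply shiftAt_of_not_prefix
      intro h
      rcases le_or_gt u.length v.length with hl | hl
      · exact h2 (List.prefix_of_prefix_length_le h (List.prefix_append _ _) hl)
      · have heq : u = v ++ [j] := h.eq_of_length (le_antisymm h.length_le (by simp; omega))
        exact h1 (by rw [heq]; exact List.prefix_append v [j])
    · exact absurd rfl hne
    · rw [shiftAt_of_not_prefix j h1, ← append_cons_append, shiftAt_cons, shiftAt_cons,
        append_cons_append]
  · exact absurd rfl hne
  · rw [shiftAt_of_not_prefix i (not_append_cons_prefix v c r), shiftAt_cons]
    apply shiftAt_of_not_prefix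
    intro h
    rw [List.prefix_append_right_inj, List.cons_prefix_cons] at h
    obtain ⟨hc, -⟩ := h
    split_ifs at hc <;> omega

lemma shiftAt_new_comm' {u v : List ℕ} (hne : u ≠ v) (i j : ℕ) :
    shiftAt v j u ++ [i] = shiftAt (shiftAt u i v) j (u ++ [i]) :=
  (shiftAt_new_comm (Ne.symm hne) j i).symm

lemma mem_attach_of_mem {v y : List ℕ} {j : ℕ} (hv : v ∈ T.verts) (hj : j ≤ arity T v)
    (ham : (arity T v : ℕ∞) < m) (hy : y ∈ T.verts) :
    shiftAt v j y ∈ (attach T v j).verts := by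
  rw [attach_verts hv hj ham]
  exact shiftAt_mem_attachVerts hy

lemma attach_comm_same {v : List ℕ} {i j : ℕ} (hv : v ∈ T.verts) (hij : i ≤ j)
    (hj : j ≤ arity T v) (ham : ((arity T v + 1 : ℕ) : ℕ∞) < m) :
    attach (attach T v j) v i = attach (attach T v i) v (j + 1) := by
  have ham' : (arity T v : ℕ∞) < m :=
    lt_of_le_of_lt (by exact_mod_cast Nat.le_succ _) ham
  have hi : i ≤ arity T v := hij.trans hj
  have hv1 : v ∈ (attach T v j).verts := by
    have := mem_attach_of_mem hv hj ham' hv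
    rwa [shiftAt_self] at this
  have hv2 : v ∈ (attach T v i).verts := by
    have := mem_attach_of_mem hv hi ham' hv
    rwa [shiftAt_self] at this
  have e1 : arity (attach T v j) v = arity T v + 1 := arity_attach_self hv hj ham'
  have e2 : arity (attach T v i) v = arity T v + 1 := arity_attach_self hv hi ham'
  apply ext'
  rw [attach_verts hv1 (by omega) (by rw [e1]; exact_mod_cast ham),
    attach_verts hv2 (by omega) (by rw [e2]; exact_mod_cast ham)]
  unfold attachVerts
  rw [attach_verts hv hj ham', attach_verts hv hi ham']
  unfold attachVerts
  rw [Finset.image_insert, Finset.image_insert, Finset.image_image, Finset.image_image,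
    show shiftAt v i (v ++ [j]) = v ++ [j + 1] from by rw [shiftAt_cons, if_pos hij],
    show shiftAt v (j + 1) (v ++ [i]) = v ++ [i] from by rw [shiftAt_cons, if_neg (by omega)],
    show shiftAt v i ∘ shiftAt v j = shiftAt v (j + 1) ∘ shiftAt v i from
      funext fun q => shiftAt_comm_same hij q,
    Finset.insert_comm]

lemma attach_comm_ne {v u : List ℕ} {j i : ℕ}
    (hv : v ∈ T.verts) (hj : j ≤ arity T v) (hamv : (arity T v : ℕ∞) < m)
    (hu : u ∈ T.verts) (hi : i ≤ arity T u) (hamu : (arity T u : ℕ∞) < m)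
    (hne : u ≠ v) :
    attach (attach T v j) (shiftAt v j u) i = attach (attach T u i) (shiftAt u i v) j := by
  have hWmem : shiftAt v j u ∈ (attach T v j).verts := mem_attach_of_mem hv hj hamv hu
  have hWar : arity (attach T v j) (shiftAt v j u) = arity T u :=
    arity_attach_other hv hj hamv hu hne
  have hVmem : shiftAt u i v ∈ (attach T u i).verts := mem_attach_of_mem hu hi hamu hv
  have hVar : arity (attach T u i) (shiftAt u i v) = arity T v :=
    arity_attach_other hu hi hamu hv (Ne.symm hne)
  apply ext'
  rw [attach_verts hWmem (by rw [hWar]; exact hi) (by rw [hWar]; exact hamu),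
    attach_verts hVmem (by rw [hVar]; exact hj) (by rw [hVar]; exact hamv)]
  unfold attachVerts
  rw [attach_verts hv hj hamv, attach_verts hu hi hamu]
  unfold attachVerts
  rw [Finset.image_insert, Finset.image_insert, Finset.image_image, Finset.image_image,
    shiftAt_new_comm hne i j, ← shiftAt_new_comm' hne i j,
    show (shiftAt (shiftAt v j u) i) ∘ (shiftAt v j)
        = (shiftAt (shiftAt u i v) j) ∘ (shiftAt u i) from
      funext fun q => shiftAt_comm_ne hne i j q,
    Finset.insert_comm]

end PTree
namespace PTree

variable {m : ℕ∞} {T : PTree m}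

lemma mem_attachable_iff {v : List ℕ} :
    v ∈ attachable T ↔ v ∈ T.verts ∧ arity T v ≠ 0 ∧ (arity T v : ℕ∞) < m := by
  simp [attachable, Finset.mem_filter, and_assoc]

/-- Index set for the double attachment sum. -/
noncomputable def coreIdx (T : PTree m) :
    Finset (Σ _ : (Σ _ : List ℕ, ℕ), (Σ _ : List ℕ, ℕ)) :=
  ((attachable T).sigma fun v => Finset.range (arity T v + 1)).sigma
    (fun p => (attachable (attach T p.1 p.2)).sigma
      fun w => Finset.range (arity (attach T p.1 p.2) w + 1))

lemma mem_coreIdx {a : Σ _ : (Σ _ : List ℕ, ℕ), (Σ _ : List ℕ, ℕ)} :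
    a ∈ coreIdx T ↔ (a.1.1 ∈ attachable T ∧ a.1.2 < arity T a.1.1 + 1)
      ∧ a.2.1 ∈ attachable (attach T a.1.1 a.1.2)
      ∧ a.2.2 < arity (attach T a.1.1 a.1.2) a.2.1 + 1 := by
  obtain ⟨⟨v, j⟩, ⟨w, i⟩⟩ := a
  simp [coreIdx, Finset.mem_sigma, Finset.mem_range]

/-- The fixed-point-free involution swapping the order of two attachments. -/
def invo : (Σ _ : (Σ _ : List ℕ, ℕ), (Σ _ : List ℕ, ℕ)) →
    (Σ _ : (Σ _ : List ℕ, ℕ), (Σ _ : List ℕ, ℕ)) := fun a =>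
  if a.2.1 = a.1.1 then
    (if a.2.2 ≤ a.1.2 then ⟨⟨a.1.1, a.2.2⟩, ⟨a.1.1, a.1.2 + 1⟩⟩
     else ⟨⟨a.1.1, a.2.2 - 1⟩, ⟨a.1.1, a.1.2⟩⟩)
  else ⟨⟨unshiftAt a.1.1 a.1.2 a.2.1, a.2.2⟩,
        ⟨shiftAt (unshiftAt a.1.1 a.1.2 a.2.1) a.2.2 a.1.1, a.1.2⟩⟩

lemma invo_def (v w : List ℕ) (j i : ℕ) :
    invo ⟨⟨v, j⟩, ⟨w, i⟩⟩ = if w = v then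
      (if i ≤ j then ⟨⟨v, i⟩, ⟨v, j + 1⟩⟩ else ⟨⟨v, i - 1⟩, ⟨v, j⟩⟩)
    else ⟨⟨unshiftAt v j w, i⟩, ⟨shiftAt (unshiftAt v j w) i v, j⟩⟩ := rfl

lemma invo_spec (a : Σ _ : (Σ _ : List ℕ, ℕ), (Σ _ : List ℕ, ℕ)) (ha : a ∈ coreIdx T) :
    invo a ∈ coreIdx T ∧ invo (invo a) = a ∧ invo a ≠ a ∧
      attach (attach T (invo a).1.1 (invo a).1.2) (invo a).2.1 (invo a).2.2
        = attach (attach T a.1.1 a.1.2) a.2.1 a.2.2 := by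
  obtain ⟨⟨v, j⟩, ⟨w, i⟩⟩ := a
  rw [mem_coreIdx] at ha
  dsimp only at ha ⊢
  obtain ⟨⟨hva, hj⟩, hwa, hi⟩ := ha
  obtain ⟨hv, hv0, hvm⟩ := mem_attachable_iff.mp hva
  have hj' : j ≤ arity T v := by omega
  obtain ⟨hwmem, hw0, hwm⟩ := mem_attachable_iff.mp hwa
  by_cases hwv : w = v
  · subst hwv
    have e1 : arity (attach T w j) w = arity T w + 1 := arity_attach_self hv hj' hvm
    rw [e1] at hi hw0 hwm
    have hvi : ∀ i' : ℕ, i' ≤ arity T w → w ∈ attachable (attach T w i') := by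
      intro i' hi'
      rw [mem_attachable_iff, arity_attach_self hv hi' hvm]
      refine ⟨?_, by omega, by exact_mod_cast hwm⟩
      have := mem_attach_of_mem hv hi' hvm hv
      rwa [shiftAt_self] at this
    by_cases hij : i ≤ j
    · rw [invo_def, if_pos rfl, if_pos hij]
      have hie : i ≤ arity T w := by omega
      have hmem : (⟨⟨w, i⟩, ⟨w, j + 1⟩⟩ :
          Σ _ : (Σ _ : List ℕ, ℕ), (Σ _ : List ℕ, ℕ)) ∈ coreIdx T := by
        rw [mem_coreIdx]
        dsimp only
        exact ⟨⟨hva, by omega⟩, hvi i hie, by rw [arity_attach_self hv hie hvm]; omega⟩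
      refine ⟨hmem, ?_, ?_, ?_⟩
      · rw [invo_def, if_pos rfl, if_neg (by omega)]
        simp
      · intro h
        have h1 := congrArg (fun x => x.1.2) h
        have h2 := congrArg (fun x => x.2.2) h
        dsimp only at h1 h2
        omega
      · exact (attach_comm_same hv hij hj' (by exact_mod_cast hwm)).symm
    · rw [invo_def, if_pos rfl, if_neg hij]
      have hie : i - 1 ≤ arity T w := by omega
      have hmem : (⟨⟨w, i - 1⟩, ⟨w, j⟩⟩ :
          Σ _ : (Σ _ : List ℕ, ℕ), (Σ _ : List ℕ, ℕ)) ∈ coreIdx T := by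
        rw [mem_coreIdx]
        dsimp only
        exact ⟨⟨hva, by omega⟩, hvi (i - 1) hie, by rw [arity_attach_self hv hie hvm]; omega⟩
      refine ⟨hmem, ?_, ?_, ?_⟩
      · rw [invo_def, if_pos rfl, if_pos (by omega)]
        have h3 : i - 1 + 1 = i := by omega
        rw [h3]
      · intro h
        have h2 := congrArg (fun x => x.2.2) h
        dsimp only at h2
        omega
      · have := attach_comm_same hv (show j ≤ i - 1 by omega) hie (by exact_mod_cast hwm)
        rwa [show i - 1 + 1 = i by omega] at this
  · rw [attach_verts hv hj' hvm, mem_attachVerts] at hwmem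
    rcases hwmem with rfl | ⟨y, hy, hsy⟩
    · exfalso
      exact hw0 (arity_attach_new hv hj' hvm)
    · have hyu : unshiftAt v j w = y := by rw [← hsy, unshift_shift]
      have hune : y ≠ v := by
        intro h
        subst h
        rw [shiftAt_self] at hsy
        exact hwv hsy.symm
      have hWar : arity (attach T v j) w = arity T y := by
        rw [← hsy]
        exact arity_attach_other hv hj' hvm hy hune
      rw [hWar] at hi hw0 hwm
      have hi' : i ≤ arity T y := by omega
      rw [invo_def, if_neg hwv, hyu]
      have hmem : (⟨⟨y, i⟩, ⟨shiftAt y i v, j⟩⟩ :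
          Σ _ : (Σ _ : List ℕ, ℕ), (Σ _ : List ℕ, ℕ)) ∈ coreIdx T := by
        rw [mem_coreIdx]
        dsimp only
        refine ⟨⟨mem_attachable_iff.mpr ⟨hy, hw0, hwm⟩, by omega⟩, ?_, ?_⟩
        · rw [mem_attachable_iff, arity_attach_other hy hi' hwm hv (Ne.symm hune)]
          exact ⟨mem_attach_of_mem hy hi' hwm hv, hv0, hvm⟩
        · rw [arity_attach_other hy hi' hwm hv (Ne.symm hune)]
          omega
      refine ⟨hmem, ?_, ?_, ?_⟩
      · have hc : ¬ shiftAt y i v = y :=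
          fun h => hune (shiftAt_injective y i (h.trans (shiftAt_self y i).symm)).symm
        rw [invo_def, if_neg hc, unshift_shift, hsy]
      · intro h
        have h1 := congrArg (fun x => x.1.1) h
        dsimp only at h1
        exact hune h1
      · rw [← hsy]
        exact (attach_comm_ne hv hj' hvm hy hi' hwm hune).symm

end PTree
section AlgAux

variable (k : Type) [Field k] (m : ℕ∞)

lemma p2Map_single (T : PTree m) (c : k) :
    p2Map k m (Finsupp.single T c) = c • p2Val k m T := by
  unfold p2Map
  rw [Finsupp.lsum_single, LinearMap.toSpanSingleton_apply]

lemma p2Map_single_one (T : PTree m) :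
    p2Map k m (Finsupp.single T (1 : k)) = p2Val k m T := by
  rw [p2Map_single, one_smul]

lemma p2Map_p2Val [CharP k 2] (T : PTree m) : p2Map k m (p2Val k m T) = 0 := by
  classical
  have hrw : p2Map k m (p2Val k m T)
      = ∑ a ∈ PTree.coreIdx T,
          Finsupp.single (PTree.attach (PTree.attach T a.1.1 a.1.2) a.2.1 a.2.2) (1 : k) := by
    unfold PTree.coreIdx
    rw [Finset.sum_sigma]
    unfold p2Val
    rw [map_sum, Finset.sum_sigma]
    refine Finset.sum_congr rfl fun p hp => ?_
    rw [map_sum]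
    refine Finset.sum_congr rfl fun j hj => ?_
    rw [p2Map_single_one, Finset.sum_sigma]
    unfold p2Val
    rfl
  rw [hrw]
  refine Finset.sum_involution (fun a _ => PTree.invo a) ?_ ?_ ?_ ?_
  · intro a ha
    rw [(PTree.invo_spec a ha).2.2.2, ← Finsupp.single_add]
    have h2 : (1 : k) + 1 = 0 := by
      have h := CharTwo.two_eq_zero (R := k)
      rwa [← one_add_one_eq_two] at h
    rw [h2, Finsupp.single_zero]
  · intro a ha _
    exact (PTree.invo_spec a ha).2.2.1
  · intro a ha
    exact (PTree.invo_spec a ha).1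
  · intro a ha
    exact (PTree.invo_spec a ha).2.1

lemma p2Map_p2Map [CharP k 2] (x : PTreeMod k m) : p2Map k m (p2Map k m x) = 0 := by
  induction x using Finsupp.induction_linear with
  | zero => simp
  | add f g hf hg => rw [map_add, map_add, hf, hg, add_zero]
  | single a b => rw [p2Map_single, map_smul, p2Map_p2Val, smul_zero]

lemma dev1PLin_left (T2 : PTree m) (x : PTreeMod k m) :
    dev1PLin k m x (Finsupp.single T2 1)
      = p2Map k m (starPLin k m x (Finsupp.single T2 1))
        + starPLin k m (p2Map k m x) (Finsupp.single T2 1)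
        + starPLin k m x (p2Val k m T2) := by
  induction x using Finsupp.induction_linear with
  | zero => simp
  | add f g hf hg =>
    simp only [map_add, LinearMap.add_apply, hf, hg]
    abel
  | single a b =>
    simp only [dev1PLin, starPLin, p2Map, dev1P, Finsupp.lsum_single,
      LinearMap.toSpanSingleton_apply, LinearMap.smul_apply, map_smul, smul_add, one_smul]

lemma dev1PLin_right (T1 : PTree m) (y : PTreeMod k m) :
    dev1PLin k m (Finsupp.single T1 1) y
      = p2Map k m (starPLin k m (Finsupp.single T1 1) y)
        + starPLin k m (p2Val k m T1) y
        + starPLin k m (Finsupp.single T1 1) (p2Map k m y) := by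
  have hs : ∀ (F : PTreeMod k m →ₗ[k] PTreeMod k m) (a : PTree m) (b : k),
      F (Finsupp.single a b) = b • F (Finsupp.single a 1) := by
    intro F a b
    rw [← map_smul, Finsupp.smul_single, smul_eq_mul, mul_one]
  induction y using Finsupp.induction_linear with
  | zero => simp
  | add f g hf hg =>
    simp only [map_add, hf, hg]
    abel
  | single a b =>
    rw [hs (starPLin k m (p2Val k m T1)) a b]
    simp only [dev1PLin, starPLin, p2Map, dev1P, Finsupp.lsum_single,
      LinearMap.toSpanSingleton_apply, LinearMap.smul_apply, map_smul, smul_add, one_smul]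

end AlgAux

/-- **STATEMENT 19.** Over a field of characteristic 2, for all planar
clear-edged `m`-bonsais `T1`, `T2`:
`∂(T1 *₁ T2) = (∂T1) *₁ T2 + T1 *₁ (∂T2)`; that is, the second deviation
`T1 *₂ T2 = ∂(T1 *₁ T2) + (∂T1) *₁ T2 + T1 *₁ (∂T2)` vanishes identically. -/
theorem planar_dev2_vanishes (k : Type) [Field k] [CharP k 2] (m : ℕ)
    (hm : 1 ≤ m) (T1 T2 : PTree (m : ℕ∞)) :
    p2Map k (m : ℕ∞) (dev1P k (m : ℕ∞) T1 T2)
      = dev1PLin k (m : ℕ∞) (p2Val k (m : ℕ∞) T1) (Finsupp.single T2 1)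
        + dev1PLin k (m : ℕ∞) (Finsupp.single T1 1) (p2Val k (m : ℕ∞) T2) := by
  have e1 := dev1PLin_left k (m : ℕ∞) T2 (p2Val k (m : ℕ∞) T1)
  have e2 := dev1PLin_right k (m : ℕ∞) T1 (p2Val k (m : ℕ∞) T2)
  rw [p2Map_p2Val, map_zero, LinearMap.zero_apply, add_zero] at e1
  rw [p2Map_p2Val, map_zero, add_zero] at e2
  rw [dev1P, map_add, map_add, p2Map_p2Map, zero_add, e1, e2]
  have hXX : starPLin k (m : ℕ∞) (p2Val k (m : ℕ∞) T1) (p2Val k (m : ℕ∞) T2)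
      + starPLin k (m : ℕ∞) (p2Val k (m : ℕ∞) T1) (p2Val k (m : ℕ∞) T2) = 0 := by
    rw [← two_smul k, show (2 : k) = 0 from CharTwo.two_eq_zero, zero_smul]
  rw [add_add_add_comm, hXX, add_zero]
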